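/- For every natural number n ≥ 1, the sum of the six entries of Qⁿ⁻¹·w equals the sum of the four entries of Mⁿ⁻¹·v, where w = (2, 0, 0, 0, 0, 2Y)ᵀ and v = (2, 0, 0, 2Y)ᵀ. (That is, the 6×6 transfer matrix recurrence and the reduced 4×4 transfer matrix recurrence yield the same genus polynomial of Dₙ.) -/
import Mathlib


open Polynomial Matrix

/-- The indeterminate `Y` of `ℤ[Y]`. -/
noncomputable def Y : Polynomial ℤ := Polynomial.X

/-- The 6×6 transfer matrix for the stratified genus distribution of doubly hexagonal chains. -/
noncomputable def Q : Matrix (Fin 6) (Fin 6) (Polynomial ℤ) :=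
  !![1, 2, 2, 4, 8, 8;
     6*Y, 4*Y, 4*Y, 8*Y, 0, 0;
     2*Y, 4*Y, 4*Y, 0, 0, 0;
     2*Y, 4*Y, 4*Y, 0, 0, 0;
     2*Y^2, 0, 0, 0, 0, 0;
     2*Y^2 + Y, 2*Y, 2*Y, 4*Y, 8*Y, 8*Y]

/-- The reduced transfer matrix. -/
noncomputable def M : Matrix (Fin 4) (Fin 4) (Polynomial ℤ) :=
  !![1, 2, 4, 8;
     8*Y, 8*Y, 8*Y, 0;
     2*Y, 4*Y, 0, 0;
     4*Y^2 + Y, 2*Y, 4*Y, 8*Y]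

/-- The initial vector for the 6×6 recurrence. -/
noncomputable def w : Fin 6 → Polynomial ℤ := ![2, 0, 0, 0, 0, 2*Y]

/-- The initial vector for the reduced 4×4 recurrence. -/
noncomputable def v : Fin 4 → Polynomial ℤ := ![2, 0, 0, 2*Y]

@[simp] lemma cons_val_five {α : Type*} (x : α) (u : Fin 5 → α) :
    Matrix.vecCons x u 5 = u 4 := rfl

/-- The lumping matrix merging states {0}, {1,2}, {3}, {4,5}. -/
noncomputable def P : Matrix (Fin 4) (Fin 6) (Polynomial ℤ) :=
  !![1,0,0,0,0,0;
     0,1,1,0,0,0;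
     0,0,0,1,0,0;
     0,0,0,0,1,1]

lemma hPQ : P * Q = M * P := by
  ext i j
  fin_cases i <;> fin_cases j <;>
    simp [P, Q, M, Matrix.mul_apply, Fin.sum_univ_six, Fin.sum_univ_four, Matrix.vecHead, Matrix.vecTail] <;> ring

lemma hPw : P.mulVec w = v := by
  ext i
  fin_cases i <;>
    simp [P, w, v, Matrix.mulVec, dotProduct, Fin.sum_univ_six, Matrix.vecHead, Matrix.vecTail]

lemma key (k : ℕ) : P.mulVec ((Q ^ k).mulVec w) = (M ^ k).mulVec v := by
  induction k with
  | zero => simp [hPw]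
  | succ k ih =>
      rw [pow_succ', pow_succ']
      rw [← Matrix.mulVec_mulVec, ← Matrix.mulVec_mulVec, Matrix.mulVec_mulVec,
        hPQ, ← Matrix.mulVec_mulVec, ih]

theorem full_eq_reduced (n : ℕ) (hn : 1 ≤ n) :
    ∑ i, (Q ^ (n - 1)).mulVec w i = ∑ i, (M ^ (n - 1)).mulVec v i := by
  have h := key (n - 1)
  have hsum : ∀ x : Fin 6 → Polynomial ℤ, ∑ i, P.mulVec x i = ∑ j, x j := by
    intro x
    simp [P, Matrix.mulVec, dotProduct, Fin.sum_univ_six, Fin.sum_univ_four, Matrix.vecHead, Matrix.vecTail]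
    ring
  calc ∑ i, (Q ^ (n - 1)).mulVec w i
      = ∑ i, P.mulVec ((Q ^ (n - 1)).mulVec w) i := (hsum _).symm
    _ = ∑ i, (M ^ (n - 1)).mulVec v i := by rw [h]
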